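/- For all b and x: b I_1(2√(b(b−x)))/√(b(b−x)) = ∫_0^b J_0(2√(xy)) I_0(2√(b(b−y))) dy, as an identity of entire functions, where I_0(2√u) = ∑_{n≥0} u^n/(n!)^2 and b I_1(2√(bu))/√(bu) = ∑_{n≥0} b^{n+1} u^n/(n!(n+1)!). -/

import Mathlib

/-!
Since `J₀(2√u) = I₀(2√(-u))`, the integrand is `I₀(2√(u t)) I₀(2√(v (1 - t)))` with `u = -xb`,
`v = b²`. Multiplying the two series and integrating termwise with the beta integral
`∫₀¹ tᵐ (1 - t)ⁿ dt = m! n! / (m + n + 1)!`, the terms with `m + n = k` sum, by the binomial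
theorem, to `(u + v)ᵏ / (k! (k + 1)!)`; and `u + v = b (b - x)`.
-/

open MeasureTheory

/-- `J0c u = J₀(2√u) = ∑ (-1)ⁿ uⁿ/(n!)²` (entire). -/
noncomputable def J0c (u : ℂ) : ℂ := ∑' n : ℕ, (-1)^n * u^n / ((Nat.factorial n : ℂ))^2

/-- `I0c u = I₀(2√u) = ∑ uⁿ/(n!)²` (entire). -/
noncomputable def I0c (u : ℂ) : ℂ := ∑' n : ℕ, u^n / ((Nat.factorial n : ℂ))^2

/-- `i1c b u = b I₁(2√(bu))/√(bu) = ∑ bⁿ⁺¹ uⁿ/(n!(n+1)!)` (entire). -/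
noncomputable def i1c (b u : ℂ) : ℂ :=
  ∑' n : ℕ, b^(n+1) * u^n / ((Nat.factorial n : ℂ) * (Nat.factorial (n+1) : ℂ))

open Finset
open scoped Nat

theorem summable_norm_pow_div_factorial_sq (u : ℂ) :
    Summable fun n : ℕ => ‖u ^ n / (n ! : ℂ) ^ 2‖ := by
  refine (Real.summable_pow_div_factorial ‖u‖).of_nonneg_of_le (fun n => by positivity) fun n => ?_
  rw [norm_div, norm_pow, norm_pow, Complex.norm_natCast]
  gcongr
  exact le_self_pow₀ (Nat.one_le_cast.mpr n.factorial_pos) two_ne_zero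

theorem integral_ofReal_pow_mul_one_sub_pow (m n : ℕ) :
    ∫ t in (0:ℝ)..1, (t:ℂ) ^ m * (1 - (t:ℂ)) ^ n = m ! * n ! / (m + n + 1)! := by
  have hm : (0:ℝ) < ((m:ℂ) + 1).re := by simp; positivity
  have hn : (0:ℝ) < ((n:ℂ) + 1).re := by simp; positivity
  have h := Complex.betaIntegral_eq_Gamma_mul_div _ _ hm hn
  rw [show (m:ℂ) + 1 + (n + 1) = ((m + n + 1 : ℕ) : ℂ) + 1 by push_cast; ring,
    Complex.Gamma_nat_eq_factorial, Complex.Gamma_nat_eq_factorial,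
    Complex.Gamma_nat_eq_factorial] at h
  rw [← h, Complex.betaIntegral]
  refine intervalIntegral.integral_congr fun t _ => ?_
  simp only [add_sub_cancel_right, Complex.cpow_natCast]

theorem norm_mul_pow_le {𝕜 : Type*} [NormedDivisionRing 𝕜] {z : 𝕜} (hz : ‖z‖ ≤ 1)
    (a : 𝕜) (m : ℕ) : ‖a * z ^ m‖ ≤ ‖a‖ := by
  rw [norm_mul, norm_pow]
  exact mul_le_of_le_one_right (norm_nonneg _) (pow_le_one₀ (norm_nonneg _) hz)

theorem norm_ofReal_le_one_of_mem_Icc {t : ℝ} (ht : t ∈ Set.Icc 0 1) :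
    ‖(t:ℂ)‖ ≤ 1 ∧ ‖1 - (t:ℂ)‖ ≤ 1 := by
  rw [← Complex.ofReal_one, ← Complex.ofReal_sub, Complex.norm_real, Complex.norm_real,
    Real.norm_of_nonneg ht.1, Real.norm_of_nonneg (sub_nonneg.2 ht.2)]
  constructor <;> linarith [ht.1, ht.2]

theorem integral_sum_antidiagonal_mul_pow_mul_one_sub_pow (a c : ℕ → ℂ) (k : ℕ) :
    ∫ t in (0:ℝ)..1, ∑ p ∈ antidiagonal k, a p.1 * (t:ℂ) ^ p.1 * (c p.2 * (1 - (t:ℂ)) ^ p.2)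
      = ∑ p ∈ antidiagonal k, a p.1 * c p.2 * (p.1 ! * p.2 ! / (k + 1)! : ℂ) := by
  rw [intervalIntegral.integral_finsetSum fun p _ =>
    (by fun_prop : Continuous _).intervalIntegrable _ _]
  refine sum_congr rfl fun p hp => ?_
  rw [HasAntidiagonal.mem_antidiagonal] at hp
  simp_rw [mul_mul_mul_comm (a p.1)]
  rw [intervalIntegral.integral_const_mul, integral_ofReal_pow_mul_one_sub_pow, hp]

theorem hasSum_sum_antidiagonal_mul_pow_mul_one_sub_pow {a c : ℕ → ℂ}
    (ha : Summable fun m => ‖a m‖) (hc : Summable fun n => ‖c n‖) {t : ℝ} (ht : t ∈ Set.Icc 0 1) :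
    HasSum (fun k => ∑ p ∈ antidiagonal k, a p.1 * (t:ℂ) ^ p.1 * (c p.2 * (1 - (t:ℂ)) ^ p.2))
      ((∑' m, a m * (t:ℂ) ^ m) * ∑' n, c n * (1 - (t:ℂ)) ^ n) := by
  have hA : Summable fun m => ‖a m * (t:ℂ) ^ m‖ := ha.of_nonneg_of_le (fun _ => norm_nonneg _)
    fun m => norm_mul_pow_le (norm_ofReal_le_one_of_mem_Icc ht).1 _ _
  have hC : Summable fun n => ‖c n * (1 - (t:ℂ)) ^ n‖ := hc.of_nonneg_of_le
    (fun _ => norm_nonneg _) fun n => norm_mul_pow_le (norm_ofReal_le_one_of_mem_Icc ht).2 _ _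
  rw [tsum_mul_tsum_eq_tsum_sum_antidiagonal_of_summable_norm hA hC]
  exact (summable_norm_sum_mul_antidiagonal_of_summable_norm hA hC).of_norm.hasSum

theorem hasSum_integral_tsum_mul_tsum_one_sub {a c : ℕ → ℂ}
    (ha : Summable fun m => ‖a m‖) (hc : Summable fun n => ‖c n‖) :
    HasSum (fun k => ∑ p ∈ antidiagonal k, a p.1 * c p.2 * (p.1 ! * p.2 ! / (k + 1)! : ℂ))
      (∫ t in (0:ℝ)..1, (∑' m, a m * (t:ℂ) ^ m) * ∑' n, c n * (1 - (t:ℂ)) ^ n) := by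
  have hIcc {t : ℝ} (ht : t ∈ Set.uIoc 0 1) : t ∈ Set.Icc 0 1 :=
    Set.Ioc_subset_Icc_self (Set.uIoc_of_le (zero_le_one (α := ℝ)) ▸ ht)
  have hterm {t : ℝ} (ht : t ∈ Set.uIoc 0 1) (p : ℕ × ℕ) :
      ‖a p.1 * (t:ℂ) ^ p.1 * (c p.2 * (1 - (t:ℂ)) ^ p.2)‖ ≤ ‖a p.1‖ * ‖c p.2‖ := by
    obtain ⟨h₁, h₂⟩ := norm_ofReal_le_one_of_mem_Icc (hIcc ht)
    rw [norm_mul]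
    exact mul_le_mul (norm_mul_pow_le h₁ _ _) (norm_mul_pow_le h₂ _ _)
      (norm_nonneg _) (norm_nonneg _)
  have hbound : Summable fun k => ∑ p ∈ antidiagonal k, ‖a p.1‖ * ‖c p.2‖ :=
    summable_sum_mul_antidiagonal_of_summable_mul (f := fun m => ‖a m‖) (g := fun n => ‖c n‖)
      (ha.mul_of_nonneg hc (fun _ => norm_nonneg _) fun _ => norm_nonneg _)
  simp only [← integral_sum_antidiagonal_mul_pow_mul_one_sub_pow]
  exact intervalIntegral.hasSum_integral_of_dominated_convergence
    (fun k _ => ∑ p ∈ antidiagonal k, ‖a p.1‖ * ‖c p.2‖)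
    (fun k => (by fun_prop : Continuous _).aestronglyMeasurable)
    (fun k => ae_of_all _ fun t ht => (norm_sum_le _ _).trans (sum_le_sum fun p _ => hterm ht p))
    (ae_of_all _ fun _ _ => hbound) intervalIntegrable_const
    (ae_of_all _ fun t ht =>
      hasSum_sum_antidiagonal_mul_pow_mul_one_sub_pow ha hc (hIcc ht))

theorem J0c_eq_I0c_neg (u : ℂ) : J0c u = I0c (-u) :=
  tsum_congr fun n => by rw [neg_pow u]

theorem I0c_mul_eq_tsum (u z : ℂ) : I0c (u * z) = ∑' n : ℕ, u ^ n / (n ! : ℂ) ^ 2 * z ^ n :=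
  tsum_congr fun n => by ring

theorem i1c_eq_mul_i1c_one (b u : ℂ) : i1c b u = b * i1c 1 (b * u) := by
  rw [i1c, i1c, ← tsum_mul_left]
  exact tsum_congr fun n => by ring

theorem sum_antidiagonal_pow_div_factorial_sq_mul (u v : ℂ) (k : ℕ) :
    ∑ p ∈ antidiagonal k, u ^ p.1 / (p.1 ! : ℂ) ^ 2 * (v ^ p.2 / (p.2 ! : ℂ) ^ 2) *
        (p.1 ! * p.2 ! / (k + 1)! : ℂ)
      = (u + v) ^ k / (k ! * (k + 1)! : ℂ) := by
  rw [(Commute.all u v).add_pow', sum_div]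
  refine sum_congr rfl fun p hp => ?_
  rw [HasAntidiagonal.mem_antidiagonal] at hp
  subst hp
  have hchoose : ((p.1 + p.2).choose p.1 * p.1 ! * p.2 ! : ℂ) = (p.1 + p.2)! := by
    have h := Nat.choose_mul_factorial_mul_factorial (Nat.le_add_right p.1 p.2)
    rw [Nat.add_sub_cancel_left] at h
    exact_mod_cast h
  have hchoose_ne : ((p.1 + p.2).choose p.1 : ℂ) ≠ 0 :=
    mod_cast (Nat.choose_pos (Nat.le_add_right _ _)).ne'
  rw [nsmul_eq_mul, ← hchoose]
  field_simp

theorem integral_I0c_mul_I0c_one_sub (u v : ℂ) :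
    ∫ t in (0:ℝ)..1, I0c (u * t) * I0c (v * (1 - t)) = i1c 1 (u + v) := by
  simp_rw [I0c_mul_eq_tsum]
  rw [← (hasSum_integral_tsum_mul_tsum_one_sub (summable_norm_pow_div_factorial_sq u)
    (summable_norm_pow_div_factorial_sq v)).tsum_eq, i1c]
  exact tsum_congr fun k => by rw [sum_antidiagonal_pow_div_factorial_sq_mul, one_pow, one_mul]

-- The path `[0, b]` of the integral is parametrized as `y = t b`, `t ∈ [0, 1]`.
/-- `b I₁(2√(b(b−x)))/√(b(b−x)) = ∫₀ᵇ J₀(2√(xy)) I₀(2√(b(b−y))) dy`,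
the integral over the segment from `0` to `b` being parametrized by `y = t·b`, `t ∈ [0,1]`. -/
theorem i1_integral_equation (b x : ℂ) :
    i1c b (b - x)
      = b * ∫ t in (0:ℝ)..1, J0c (x * (t * b)) * I0c (b * (b - t * b)) := by
  have hJ (t : ℂ) : J0c (x * (t * b)) = I0c (-(x * b) * t) := by
    rw [J0c_eq_I0c_neg]; congr 1; ring
  have hI (t : ℂ) : I0c (b * (b - t * b)) = I0c (b ^ 2 * (1 - t)) := by congr 1; ring
  simp_rw [hJ, hI, integral_I0c_mul_I0c_one_sub, i1c_eq_mul_i1c_one b]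
  congr 2
  ring
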